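/- arXiv:2111.06037 — 4 statements merged into one kernel-verified Lean document; each statement's English description precedes it below -/
import Mathlib

section
/- Let F = ⋂_{t=1}^k F^t, where each F^t is a downward-closed family of vectors. If for every t ∈ {1,…,k} there exists a monotone α_t-CRS for F^t with respect to q, then there exists a monotone (∏_{t=1}^k α_t)-CRS for F with respect to q. -/
open Finset

/-- A vector assigns to each item in `I` a state in `{0, 1, …, B}`. -/
abbrev Vec (I : Type) (B : ℕ) := I → Fin (B + 1)

section CRS

variable {I : Type} [Fintype I] [DecidableEq I] {B : ℕ}

/-- `q` assigns to each item a probability distribution on `{0, 1, …, B}`. -/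
def IsDist (q : I → Fin (B + 1) → ℝ) : Prop :=
  (∀ i j, 0 ≤ q i j) ∧ ∀ i, ∑ j, q i j = 1

/-- Probability of the vector `v` when coordinates are drawn independently from `q`. -/
def vecProb (q : I → Fin (B + 1) → ℝ) (v : Vec I B) : ℝ := ∏ i, q i (v i)

/-- A randomized mapping: for each vector `v`, `ψ v` is a probability distribution on vectors. -/
def IsKernel (ψ : Vec I B → Vec I B → ℝ) : Prop :=
  (∀ v u, 0 ≤ ψ v u) ∧ ∀ v, ∑ u, ψ v u = 1

/-- A family of vectors is downward closed. -/
def DownwardClosed (F : Set (Vec I B)) : Prop :=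
  ∀ ⦃u v : Vec I B⦄, u ≤ v → v ∈ F → u ∈ F

/-- `ψ` is an `α`-contention resolution scheme for `F` with respect to `q`:
it is a randomized mapping whose output always lies in `F` and keeps each coordinate
of the input or zeroes it out, and each nonzero coordinate value is kept with
(unconditional joint) probability at least `α` times its occurrence probability. -/
def IsCRS (q : I → Fin (B + 1) → ℝ) (F : Set (Vec I B)) (α : ℝ)
    (ψ : Vec I B → Vec I B → ℝ) : Prop :=
  IsKernel ψ ∧
  (∀ v u, ψ v u ≠ 0 → u ∈ F ∧ ∀ i, u i = 0 ∨ u i = v i) ∧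
  ∀ (i : I) (j : Fin (B + 1)), j ≠ 0 →
    ∑ v : Vec I B, ∑ u : Vec I B,
        (if v i = j ∧ u i = j then vecProb q v * ψ v u else 0) ≥
      α * ∑ v : Vec I B, (if v i = j then vecProb q v else 0)

/-- A CRS is monotone if the probability of keeping coordinate `i` does not increase
when the input vector grows (keeping coordinate `i` fixed). -/
def MonotoneCRS (ψ : Vec I B → Vec I B → ℝ) : Prop :=
  ∀ (u v : Vec I B) (i : I), u ≤ v → u i = v i →
    ∑ w : Vec I B, (if w i = u i then ψ u w else 0) ≥
      ∑ w : Vec I B, (if w i = v i then ψ v w else 0)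

end CRS

namespace CRSAux

variable {I : Type} [Fintype I] [DecidableEq I] {B : ℕ}

/-- Product measure of `q` on coordinates in `s`, point mass at `0` elsewhere. -/
def Wgt (q : I → Fin (B + 1) → ℝ) (s : Finset I) (v : Vec I B) : ℝ :=
  if ∀ i ∉ s, v i = 0 then ∏ i ∈ s, q i (v i) else 0

lemma Wgt_nonneg {q : I → Fin (B + 1) → ℝ} (hq0 : ∀ i j, 0 ≤ q i j) (s : Finset I)
    (v : Vec I B) : 0 ≤ Wgt q s v := by
  unfold Wgt; split
  · exact Finset.prod_nonneg fun i _ => hq0 i _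
  · exact le_refl 0

lemma Wgt_univ (q : I → Fin (B + 1) → ℝ) (v : Vec I B) : Wgt q univ v = vecProb q v := by
  simp [Wgt, vecProb]

lemma Wgt_insert {q : I → Fin (B + 1) → ℝ} {s : Finset I} {i : I} (hi : i ∉ s) (v : Vec I B) :
    Wgt q (insert i s) v = q i (v i) * Wgt q s (Function.update v i 0) := by
  unfold Wgt
  have hcond : (∀ i' ∉ insert i s, v i' = 0) ↔ (∀ i' ∉ s, Function.update v i 0 i' = 0) := by
    constructor
    · intro h i' hi'
      rcases eq_or_ne i' i with rfl | hne
      · simp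
      · rw [Function.update_of_ne hne]
        exact h i' (by simp [hi', hne])
    · intro h i' hi'
      simp only [Finset.mem_insert, not_or] at hi'
      have := h i' hi'.2
      rwa [Function.update_of_ne hi'.1] at this
  by_cases hc : ∀ i' ∉ insert i s, v i' = 0
  · rw [if_pos hc, if_pos (hcond.mp hc), Finset.prod_insert hi]
    congr 1
    refine Finset.prod_congr rfl fun i' hi' => ?_
    have hne : i' ≠ i := fun h => hi (h ▸ hi')
    rw [Function.update_of_ne hne]
  · rw [if_neg hc, if_neg (fun h => hc (hcond.mpr h)), mul_zero]

lemma Wgt_decomp {q : I → Fin (B + 1) → ℝ} {s : Finset I} {i : I} (hi : i ∉ s)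
    (G : Vec I B → ℝ) :
    ∑ v, Wgt q (insert i s) v * G v
      = ∑ a, q i a * ∑ x, Wgt q s x * G (Function.update x i a) := by
  have hzero : ∀ (x : Vec I B), x i ≠ 0 → Wgt q s x = 0 := by
    intro x hx
    rw [Wgt, if_neg]
    intro h
    exact hx (h i hi)
  -- RHS as a sum over pairs
  have hR : ∑ a, q i a * ∑ x, Wgt q s x * G (Function.update x i a)
      = ∑ p : Fin (B + 1) × Vec I B,
          q i p.1 * (Wgt q s p.2 * G (Function.update p.2 i p.1)) := by
    rw [Fintype.sum_prod_type]
    exact Finset.sum_congr rfl fun a _ => by rw [Finset.mul_sum]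
  rw [hR]
  rw [← Finset.sum_filter_of_ne (s := (Finset.univ : Finset (Fin (B + 1) × Vec I B)))
      (f := fun p : Fin (B + 1) × Vec I B => q i p.1 * (Wgt q s p.2 * G (Function.update p.2 i p.1)))
      (p := fun p : Fin (B + 1) × Vec I B => p.2 i = 0)
      (by
        intro p _ hne
        by_contra h
        refine hne ?_
        rw [hzero p.2 h, zero_mul, mul_zero])]
  refine Finset.sum_nbij' (fun v => ((v i, Function.update v i 0) : Fin (B + 1) × Vec I B))
      (fun p => Function.update p.2 i p.1) ?_ ?_ ?_ ?_ ?_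
  · intro v _
    simp [Function.update_self]
  · intro p _
    exact Finset.mem_univ _
  · intro v _
    simp [Function.update_idem, Function.update_eq_self]
  · intro p hp
    simp only [Finset.mem_filter, Finset.mem_univ, true_and] at hp
    simp only [Function.update_self, Function.update_idem]
    rw [show (0 : Fin (B + 1)) = p.2 i from hp.symm, Function.update_eq_self]
  · intro v _
    dsimp only
    rw [Wgt_insert hi, Function.update_idem, Function.update_eq_self]
    ring

lemma Wgt_total {q : I → Fin (B + 1) → ℝ} (hq : IsDist q) (s : Finset I) :
    ∑ v, Wgt q s v = 1 := by
  induction s using Finset.induction_on with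
  | empty =>
    have h : ∀ v : Vec I B, Wgt q ∅ v = if v = (fun _ => 0) then 1 else 0 := by
      intro v
      unfold Wgt
      simp only [Finset.notMem_empty, not_false_iff, forall_true_left, Finset.prod_empty]
      congr 1
      simp [funext_iff]
    simp_rw [h]
    simp
  | @insert i s hi ih =>
    have h1 := Wgt_decomp (q := q) hi (fun _ => (1 : ℝ))
    simp only [mul_one] at h1
    rw [h1]
    simp only [ih, mul_one]
    exact hq.2 i

lemma cheb {n : ℕ} (μ F G : Fin n → ℝ) (h0 : ∀ a, 0 ≤ μ a) (h1 : ∑ a, μ a = 1)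
    (hF : Antitone F) (hG : Antitone G) :
    (∑ a, μ a * F a) * (∑ a, μ a * G a) ≤ ∑ a, μ a * (F a * G a) := by
  have key : 0 ≤ ∑ a, ∑ b, μ a * μ b * ((F a - F b) * (G a - G b)) := by
    refine Finset.sum_nonneg fun a _ => Finset.sum_nonneg fun b _ => ?_
    refine mul_nonneg (mul_nonneg (h0 a) (h0 b)) ?_
    rcases le_total a b with h | h
    · have hf := hF h
      have hg := hG h
      nlinarith
    · have hf := hF h
      have hg := hG h
      nlinarith
  have expand : ∑ a, ∑ b, μ a * μ b * ((F a - F b) * (G a - G b))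
      = 2 * (∑ a, μ a * (F a * G a)) * (∑ a, μ a)
        - 2 * ((∑ a, μ a * F a) * (∑ a, μ a * G a)) := by
    have inner : ∀ a : Fin n, ∑ b, μ a * μ b * ((F a - F b) * (G a - G b))
        = (μ a * (F a * G a)) * (∑ b, μ b) - (μ a * F a) * (∑ b, μ b * G b)
          - (μ a * G a) * (∑ b, μ b * F b) + μ a * (∑ b, μ b * (F b * G b)) := by
      intro a
      rw [Finset.mul_sum, Finset.mul_sum, Finset.mul_sum, Finset.mul_sum,
        ← Finset.sum_sub_distrib, ← Finset.sum_sub_distrib, ← Finset.sum_add_distrib]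
      exact Finset.sum_congr rfl fun b _ => by ring
    rw [Finset.sum_congr rfl fun a _ => inner a, Finset.sum_add_distrib,
      Finset.sum_sub_distrib, Finset.sum_sub_distrib, ← Finset.sum_mul, ← Finset.sum_mul,
      ← Finset.sum_mul, ← Finset.sum_mul, h1]
    ring
  rw [h1, mul_one] at expand
  linarith [key, expand]

lemma update_le_update_left {x y : Vec I B} (h : x ≤ y) (i : I) (a : Fin (B + 1)) :
    Function.update x i a ≤ Function.update y i a := by
  intro i'
  rcases eq_or_ne i' i with rfl | hne
  · simp
  · rw [Function.update_of_ne hne, Function.update_of_ne hne]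
    exact h i'

lemma update_le_update_right (x : Vec I B) (i : I) {a b : Fin (B + 1)} (h : a ≤ b) :
    Function.update x i a ≤ Function.update x i b := by
  intro i'
  rcases eq_or_ne i' i with rfl | hne
  · simpa using h
  · simp [Function.update_of_ne hne]

lemma harris2 {q : I → Fin (B + 1) → ℝ} (hq : IsDist q) (s : Finset I)
    {f g : Vec I B → ℝ} (hf : Antitone f) (hg : Antitone g) :
    (∑ v, Wgt q s v * f v) * (∑ v, Wgt q s v * g v) ≤ ∑ v, Wgt q s v * (f v * g v) := by
  induction s using Finset.induction_on generalizing f g with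
  | empty =>
    have h : ∀ (H : Vec I B → ℝ), ∑ v, Wgt q ∅ v * H v = H (fun _ => 0) := by
      intro H
      have h0 : ∀ v : Vec I B, Wgt q ∅ v = if v = (fun _ => 0) then 1 else 0 := by
        intro v
        unfold Wgt
        simp only [Finset.notMem_empty, not_false_iff, forall_true_left, Finset.prod_empty]
        congr 1
        simp [funext_iff]
      simp_rw [h0, ite_mul, one_mul, zero_mul]
      exact Finset.sum_ite_eq' _ _ _ |>.trans (by simp)
    rw [h, h, h]
  | @insert i s hi ih =>
    rw [Wgt_decomp hi (fun v => f v * g v), Wgt_decomp hi f, Wgt_decomp hi g]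
    set Tf : Fin (B + 1) → ℝ := fun a => ∑ x, Wgt q s x * f (Function.update x i a) with hTf
    set Tg : Fin (B + 1) → ℝ := fun a => ∑ x, Wgt q s x * g (Function.update x i a) with hTg
    have hTfA : Antitone Tf := by
      intro a b hab
      refine Finset.sum_le_sum fun x _ => ?_
      exact mul_le_mul_of_nonneg_left (hf (update_le_update_right x i hab))
        (Wgt_nonneg hq.1 s x)
    have hTgA : Antitone Tg := by
      intro a b hab
      refine Finset.sum_le_sum fun x _ => ?_
      exact mul_le_mul_of_nonneg_left (hg (update_le_update_right x i hab))
        (Wgt_nonneg hq.1 s x)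
    calc (∑ a, q i a * Tf a) * (∑ a, q i a * Tg a)
        ≤ ∑ a, q i a * (Tf a * Tg a) :=
          cheb (q i) Tf Tg (hq.1 i) (hq.2 i) hTfA hTgA
      _ ≤ ∑ a, q i a * ∑ x, Wgt q s x * (f (Function.update x i a) * g (Function.update x i a)) := by
          refine Finset.sum_le_sum fun a _ => ?_
          refine mul_le_mul_of_nonneg_left ?_ (hq.1 i a)
          exact ih (fun x y hxy => hf (update_le_update_left hxy i a))
            (fun x y hxy => hg (update_le_update_left hxy i a))

lemma antitone_finprod {k : ℕ} {f : Fin k → Vec I B → ℝ} (u : Finset (Fin k))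
    (hanti : ∀ t, Antitone (f t)) (h0 : ∀ t v, 0 ≤ f t v) :
    Antitone (fun v => ∏ t ∈ u, f t v) := by
  intro x y hxy
  exact Finset.prod_le_prod (fun t _ => h0 t y) (fun t _ => hanti t hxy)

lemma harrisProd {q : I → Fin (B + 1) → ℝ} (hq : IsDist q) (s : Finset I) {k : ℕ}
    (f : Fin k → Vec I B → ℝ) (hanti : ∀ t, Antitone (f t)) (h0 : ∀ t v, 0 ≤ f t v)
    (u : Finset (Fin k)) :
    ∏ t ∈ u, (∑ v, Wgt q s v * f t v) ≤ ∑ v, Wgt q s v * ∏ t ∈ u, f t v := by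
  induction u using Finset.induction_on with
  | empty => simp [Wgt_total hq s]
  | @insert t u ht ih =>
    rw [Finset.prod_insert ht]
    have hsum0 : (0 : ℝ) ≤ ∑ v, Wgt q s v * f t v :=
      Finset.sum_nonneg fun v _ => mul_nonneg (Wgt_nonneg hq.1 s v) (h0 t v)
    calc (∑ v, Wgt q s v * f t v) * ∏ t' ∈ u, (∑ v, Wgt q s v * f t' v)
        ≤ (∑ v, Wgt q s v * f t v) * (∑ v, Wgt q s v * ∏ t' ∈ u, f t' v) :=
          mul_le_mul_of_nonneg_left ih hsum0
      _ ≤ ∑ v, Wgt q s v * (f t v * ∏ t' ∈ u, f t' v) :=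
          harris2 hq s (hanti t) (antitone_finprod u hanti h0)
      _ = ∑ v, Wgt q s v * ∏ t' ∈ insert t u, f t' v := by
          simp_rw [Finset.prod_insert ht]

lemma sum_cond {q : I → Fin (B + 1) → ℝ} (i : I) (j : Fin (B + 1)) (G : Vec I B → ℝ) :
    ∑ v, (if v i = j then vecProb q v * G v else 0)
      = q i j * ∑ x, Wgt q (univ.erase i) x * G (Function.update x i j) := by
  have hiu : i ∉ univ.erase i := by simp
  have h1 : ∀ v : Vec I B, (if v i = j then vecProb q v * G v else 0)
      = Wgt q univ v * (if v i = j then G v else 0) := by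
    intro v
    rw [Wgt_univ]
    split <;> ring
  simp_rw [h1]
  rw [show (univ : Finset I) = insert i (univ.erase i) by simp [Finset.insert_erase]]
  rw [Wgt_decomp hiu (fun v => if v i = j then G v else 0)]
  simp only [Function.update_self]
  have h2 : ∀ a : Fin (B + 1),
      q i a * ∑ x, Wgt q (univ.erase i) x * (if a = j then G (Function.update x i a) else 0)
      = if a = j then q i a * ∑ x, Wgt q (univ.erase i) x * G (Function.update x i a) else 0 := by
    intro a
    split
    · rfl
    · simp
  simp_rw [h2]
  rw [Finset.sum_ite_eq' univ j
    (fun a => q i a * ∑ x, Wgt q (univ.erase i) x * G (Function.update x i a))]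
  simp

section Comb

variable {k : ℕ}

/-- Combine `k` outputs by keeping a coordinate iff all of them keep it. -/
def combineVec (v : Vec I B) (w : Fin k → Vec I B) : Vec I B :=
  fun i => if ∀ t, w t i = v i then v i else 0

/-- The combined kernel: sample from each `ψs t` independently and combine. -/
def combKernel (ψs : Fin k → Vec I B → Vec I B → ℝ) (v u : Vec I B) : ℝ :=
  ∑ w : Fin k → Vec I B, (∏ t, ψs t v (w t)) * (if combineVec v w = u then 1 else 0)

lemma combKernel_ite (ψs : Fin k → Vec I B → Vec I B → ℝ) (v : Vec I B) (i : I)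
    (j : Fin (B + 1)) :
    ∑ u, (if u i = j then combKernel ψs v u else 0)
      = ∑ w : Fin k → Vec I B, (if combineVec v w i = j then ∏ t, ψs t v (w t) else 0) := by
  have hsplit : ∀ u : Vec I B, (if u i = j then combKernel ψs v u else 0)
      = ∑ w : Fin k → Vec I B,
          (if combineVec v w = u then (if u i = j then ∏ t, ψs t v (w t) else 0) else 0) := by
    intro u
    unfold combKernel
    by_cases h : u i = j
    · rw [if_pos h]
      refine Finset.sum_congr rfl fun w _ => ?_
      by_cases h2 : combineVec v w = u <;> simp [h2, h]
    · rw [if_neg h]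
      symm
      refine Finset.sum_eq_zero fun w _ => ?_
      by_cases h2 : combineVec v w = u <;> simp [h2, h]
  simp_rw [hsplit]
  rw [Finset.sum_comm]
  refine Finset.sum_congr rfl fun w _ => ?_
  rw [Finset.sum_ite_eq univ (combineVec v w)
    (fun u => if u i = j then ∏ t, ψs t v (w t) else 0), if_pos (Finset.mem_univ _)]

lemma combKernel_keep {ψs : Fin k → Vec I B → Vec I B → ℝ} {v : Vec I B} {i : I}
    {j : Fin (B + 1)} (hj : j ≠ 0) (hv : v i = j) :
    ∑ u, (if u i = j then combKernel ψs v u else 0)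
      = ∏ t, ∑ u, (if u i = j then ψs t v u else 0) := by
  rw [combKernel_ite]
  have hinner : ∀ w : Fin k → Vec I B,
      (if combineVec v w i = j then ∏ t, ψs t v (w t) else 0)
      = ∏ t, (if w t i = j then ψs t v (w t) else 0) := by
    intro w
    by_cases hw : ∀ t, w t i = j
    · have hc : combineVec v w i = j := by
        show (if ∀ t, w t i = v i then v i else 0) = j
        rw [if_pos fun t => (hw t).trans hv.symm, hv]
      rw [if_pos hc]
      symm
      exact Finset.prod_congr rfl fun t _ => if_pos (hw t)
    · have hc : combineVec v w i ≠ j := by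
        show (if ∀ t, w t i = v i then v i else 0) ≠ j
        rw [if_neg fun h => hw fun t => (h t).trans hv]
        exact fun h => hj h.symm
      rw [if_neg hc]
      symm
      obtain ⟨t0, ht0⟩ := not_forall.mp hw
      exact Finset.prod_eq_zero (Finset.mem_univ t0) (if_neg ht0)
  simp_rw [hinner]
  exact (Fintype.prod_sum (κ := fun _ : Fin k => Vec I B)
    (fun t u => if u i = j then ψs t v u else 0)).symm

lemma combKernel_keep_zero {ψs : Fin k → Vec I B → Vec I B → ℝ}
    (hker : ∀ t, IsKernel (ψs t)) {v : Vec I B} {i : I} (hv : v i = 0) :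
    ∑ u, (if u i = v i then combKernel ψs v u else 0) = 1 := by
  rw [combKernel_ite]
  have hc : ∀ w : Fin k → Vec I B, combineVec v w i = v i := by
    intro w
    show (if ∀ t, w t i = v i then v i else 0) = v i
    split
    · rfl
    · rw [hv]
  simp_rw [hc]
  simp only [if_true, eq_self_iff_true]
  rw [← Fintype.prod_sum (κ := fun _ : Fin k => Vec I B) (fun t u => ψs t v u)]
  exact Finset.prod_eq_one fun t _ => (hker t).2 v

lemma combKernel_rowsum {ψs : Fin k → Vec I B → Vec I B → ℝ}
    (hker : ∀ t, IsKernel (ψs t)) (v : Vec I B) :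
    ∑ u, combKernel ψs v u = 1 := by
  unfold combKernel
  rw [Finset.sum_comm]
  have : ∀ w : Fin k → Vec I B,
      ∑ u : Vec I B, (∏ t, ψs t v (w t)) * (if combineVec v w = u then 1 else 0)
        = ∏ t, ψs t v (w t) := by
    intro w
    rw [← Finset.mul_sum, Finset.sum_ite_eq univ (combineVec v w) (fun _ => (1 : ℝ)),
      if_pos (Finset.mem_univ _), mul_one]
  simp_rw [this]
  rw [← Fintype.prod_sum (κ := fun _ : Fin k => Vec I B) (fun t u => ψs t v u)]
  exact Finset.prod_eq_one fun t _ => (hker t).2 v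

lemma cond_split {c : Prop} [Decidable c] (P : ℝ) (ψrow : Vec I B → ℝ) (i : I)
    (j : Fin (B + 1)) :
    ∑ u, (if c ∧ u i = j then P * ψrow u else 0)
      = if c then P * ∑ u, (if u i = j then ψrow u else 0) else 0 := by
  by_cases h : c
  · simp only [h, true_and, if_true, Finset.mul_sum, mul_ite, mul_zero]
  · simp [h]

end Comb

end CRSAux

/-- If each downward-closed family `F t` admits a monotone `α t`-CRS with respect to `q`,
then the intersection `⋂ t, F t` admits a monotone `∏ t, α t`-CRS with respect to `q`. -/
theorem combine_CRS {I : Type} [Fintype I] [DecidableEq I] {B : ℕ}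
    (q : I → Fin (B + 1) → ℝ) (hq : IsDist q)
    (k : ℕ) (F : Fin k → Set (Vec I B)) (α : Fin k → ℝ)
    (hα : ∀ t, α t ∈ Set.Icc (0 : ℝ) 1)
    (hdc : ∀ t, DownwardClosed (F t))
    (hcrs : ∀ t, ∃ ψ : Vec I B → Vec I B → ℝ, IsCRS q (F t) (α t) ψ ∧ MonotoneCRS ψ) :
    ∃ ψ : Vec I B → Vec I B → ℝ,
      IsCRS q (⋂ t, F t) (∏ t, α t) ψ ∧ MonotoneCRS ψ := by
  classical
  choose ψs hcrs' hmono using hcrs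
  have hker : ∀ t, IsKernel (ψs t) := fun t => (hcrs' t).1
  refine ⟨CRSAux.combKernel ψs, ⟨⟨?_, ?_⟩, ?_, ?_⟩, ?_⟩
  · -- nonnegativity
    intro v u
    refine Finset.sum_nonneg fun w _ => ?_
    refine mul_nonneg (Finset.prod_nonneg fun t _ => (hker t).1 v (w t)) ?_
    split <;> norm_num
  · -- row sums
    exact CRSAux.combKernel_rowsum hker
  · -- support conditions
    intro v u hne
    unfold CRSAux.combKernel at hne
    obtain ⟨w, _, hw⟩ := Finset.exists_ne_zero_of_sum_ne_zero hne
    have hcomb : CRSAux.combineVec v w = u := by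
      by_contra h
      simp [h] at hw
    have hprod : ∀ t, ψs t v (w t) ≠ 0 := by
      intro t
      have hpr : (∏ t, ψs t v (w t)) ≠ 0 := fun h => by simp [h] at hw
      exact Finset.prod_ne_zero_iff.mp hpr t (Finset.mem_univ t)
    have hle : ∀ t, u ≤ w t := by
      intro t i'
      rw [← hcomb]
      show (if ∀ t', w t' i' = v i' then v i' else 0) ≤ w t i'
      split
      · next h => exact le_of_eq (h t).symm
      · exact Fin.zero_le _
    constructor
    · exact Set.mem_iInter.2 fun t => hdc t (hle t) ((hcrs' t).2.1 v (w t) (hprod t)).1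
    · intro i'
      rw [← hcomb]
      simp only [CRSAux.combineVec]
      split
      · right
        rfl
      · left
        rfl
  · -- the balancedness guarantee
    intro i j hj
    set s₀ := Finset.univ.erase i with hs₀
    set Kt : Fin k → Vec I B → ℝ := fun t x => ∑ u, (if u i = j then ψs t x u else 0) with hKt
    set ft : Fin k → Vec I B → ℝ := fun t x => Kt t (Function.update x i j) with hft
    have hL : ∀ v : Vec I B,
        ∑ u, (if v i = j ∧ u i = j then vecProb q v * CRSAux.combKernel ψs v u else 0)
          = if v i = j then vecProb q v * ∏ t, Kt t v else 0 := by
      intro v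
      rw [CRSAux.cond_split]
      by_cases h : v i = j
      · rw [if_pos h, if_pos h, CRSAux.combKernel_keep hj h]
      · rw [if_neg h, if_neg h]
    rw [Finset.sum_congr rfl fun v _ => hL v]
    have hS : ∑ v, (if v i = j then vecProb q v else 0) = q i j := by
      have h1 := CRSAux.sum_cond (q := q) i j (fun _ => (1 : ℝ))
      simp only [mul_one] at h1
      rw [h1, CRSAux.Wgt_total hq, mul_one]
    have hLHS : ∑ v, (if v i = j then vecProb q v * ∏ t, Kt t v else 0)
        = q i j * ∑ x, CRSAux.Wgt q s₀ x * ∏ t, ft t x :=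
      CRSAux.sum_cond i j (fun v => ∏ t, Kt t v)
    have hAnti : ∀ t, Antitone (ft t) := by
      intro t x y hxy
      have h1 := hmono t (Function.update x i j) (Function.update y i j) i
        (CRSAux.update_le_update_left hxy i j) (by simp)
      simpa [hft, hKt, Function.update_self] using h1
    have h0ft : ∀ t x, 0 ≤ ft t x := by
      intro t x
      refine Finset.sum_nonneg fun u _ => ?_
      split
      · exact (hker t).1 _ u
      · exact le_refl 0
    have hEt : ∀ t, α t * q i j ≤ q i j * ∑ x, CRSAux.Wgt q s₀ x * ft t x := by
      intro t
      have hg := (hcrs' t).2.2 i j hj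
      have h1 : ∀ v : Vec I B,
          ∑ u, (if v i = j ∧ u i = j then vecProb q v * ψs t v u else 0)
            = if v i = j then vecProb q v * Kt t v else 0 := fun v => CRSAux.cond_split _ _ _ _
      rw [Finset.sum_congr rfl fun v _ => h1 v, CRSAux.sum_cond i j (Kt t), hS] at hg
      exact hg
    rw [hLHS, hS, ge_iff_le]
    rcases eq_or_lt_of_le (hq.1 i j) with h0q | h0q
    · rw [← h0q]
      simp
    · have hEt' : ∀ t, α t ≤ ∑ x, CRSAux.Wgt q s₀ x * ft t x := by
        intro t
        have h2 : α t * q i j ≤ (∑ x, CRSAux.Wgt q s₀ x * ft t x) * q i j := by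
          have := hEt t
          linarith [this, mul_comm (q i j) (∑ x, CRSAux.Wgt q s₀ x * ft t x)]
        exact le_of_mul_le_mul_right h2 h0q
      have hX : (∏ t, α t) ≤ ∑ x, CRSAux.Wgt q s₀ x * ∏ t, ft t x :=
        le_trans (Finset.prod_le_prod (fun t _ => (hα t).1) (fun t _ => hEt' t))
          (CRSAux.harrisProd hq s₀ ft hAnti h0ft Finset.univ)
      calc (∏ t, α t) * q i j
          ≤ (∑ x, CRSAux.Wgt q s₀ x * ∏ t, ft t x) * q i j :=
            mul_le_mul_of_nonneg_right hX (hq.1 i j)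
        _ = q i j * ∑ x, CRSAux.Wgt q s₀ x * ∏ t, ft t x := mul_comm _ _
  · -- monotonicity
    intro u v i hle hui
    by_cases h0 : v i = 0
    · have hu0 : u i = 0 := hui.trans h0
      rw [ge_iff_le, CRSAux.combKernel_keep_zero hker h0, CRSAux.combKernel_keep_zero hker hu0]
    · rw [ge_iff_le, hui]
      rw [CRSAux.combKernel_keep h0 rfl,
        CRSAux.combKernel_keep h0 (hui.symm ▸ rfl : u i = v i)]
      refine Finset.prod_le_prod (fun t _ => ?_) (fun t _ => ?_)
      · refine Finset.sum_nonneg fun w _ => ?_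
        split
        · exact (hker t).1 _ _
        · exact le_refl 0
      · have h1 := hmono t u v i hle hui
        rw [hui] at h1
        exact h1
end

section
/- Let ψ¹ be a monotone α₁-CRS for F¹ with respect to q and ψ² a monotone α₂-CRS for F² with respect to q, where F¹ and F² are downward-closed families of vectors. Define the randomized mapping ψ by: given a vector v, draw u₁ ∼ ψ¹(v) and u₂ ∼ ψ²(v) independently, and output the vector w with w(i) = v(i) if u₁(i) = v(i) and u₂(i) = v(i), and w(i) = 0 otherwise. Then ψ is a monotone (α₁·α₂)-CRS for F¹ ∩ F² with respect to q. -/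
open Finset

/-- The combined randomized mapping: given `v`, draw `u₁ ∼ ψ₁ v` and `u₂ ∼ ψ₂ v`
independently and output the vector keeping `v i` exactly when both `u₁` and `u₂` keep it. -/
def combineKernel {I : Type} [Fintype I] [DecidableEq I] {B : ℕ}
    (ψ₁ ψ₂ : Vec I B → Vec I B → ℝ) (v w : Vec I B) : ℝ :=
  ∑ u₁ : Vec I B, ∑ u₂ : Vec I B,
    if w = (fun i => if u₁ i = v i ∧ u₂ i = v i then v i else (0 : Fin (B + 1)))
      then ψ₁ v u₁ * ψ₂ v u₂ else 0

/-!
On a coordinate `i` with `v i ≠ 0`, the combined scheme keeps `v i` exactly when both schemes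
keep it, and they act independently, so its keep probability is the product of the two; this
gives monotonicity at once. Conditioned on `v i = j`, both keep probabilities are antitone in `v`
(monotonicity of the two schemes) and the product distribution `q` is log-modular on the lattice
of vectors, so by the Harris–FKG inequality they are positively correlated:
`E[f g] ≥ E[f] E[g] ≥ α₁ α₂`. The output lies below the outputs of both schemes, hence in
`F₁ ∩ F₂` by downward closure.
-/

lemma fkg_of_antitone {α β : Type*} [DistribLattice α] [Fintype α] [CommSemiring β]
    [LinearOrder β] [IsStrictOrderedRing β] [ExistsAddOfLE β] {μ f g : α → β}
    (hμ₀ : 0 ≤ μ) (hf₀ : 0 ≤ f) (hg₀ : 0 ≤ g) (hf : Antitone f) (hg : Antitone g)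
    (hμ : ∀ a b, μ a * μ b ≤ μ (a ⊓ b) * μ (a ⊔ b)) :
    (∑ a, μ a * f a) * ∑ a, μ a * g a ≤ (∑ a, μ a) * ∑ a, μ a * (f a * g a) :=
  fkg (α := αᵒᵈ) (f ∘ OrderDual.ofDual) (g ∘ OrderDual.ofDual) (μ ∘ OrderDual.ofDual)
    hμ₀ hf₀ hg₀ hf.dual_left hg.dual_left fun _ _ => (hμ _ _).trans_eq (mul_comm _ _)

section ProductMeasure

variable {I : Type} [Fintype I] {B : ℕ}

lemma vecProb_mul_vecProb (q : I → Fin (B + 1) → ℝ) (a b : Vec I B) :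
    vecProb q a * vecProb q b = vecProb q (a ⊓ b) * vecProb q (a ⊔ b) := by
  simp only [vecProb, ← prod_mul_distrib]
  refine prod_congr rfl fun k _ => ?_
  rcases le_total (a k) (b k) with h | h
  · simp [inf_eq_left.2 h, sup_eq_right.2 h]
  · simp [inf_eq_right.2 h, sup_eq_left.2 h, mul_comm]

def pinnedProb (q : I → Fin (B + 1) → ℝ) (i : I) (j : Fin (B + 1)) (v : Vec I B) : ℝ :=
  if v i = j then vecProb q v else 0

lemma pinnedProb_nonneg {q : I → Fin (B + 1) → ℝ} (hq : ∀ i j, 0 ≤ q i j) (i : I)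
    (j : Fin (B + 1)) :
    0 ≤ pinnedProb q i j := fun v => by
  unfold pinnedProb
  split
  · exact prod_nonneg fun k _ => hq k _
  · exact le_rfl

lemma pinnedProb_mul_pinnedProb_le {q : I → Fin (B + 1) → ℝ} (hq : ∀ i j, 0 ≤ q i j) (i : I)
    (j : Fin (B + 1)) (a b : Vec I B) :
    pinnedProb q i j a * pinnedProb q i j b ≤
      pinnedProb q i j (a ⊓ b) * pinnedProb q i j (a ⊔ b) := by
  by_cases hab : a i = j ∧ b i = j
  · have hinf : (a ⊓ b) i = j := by simp [hab.1, hab.2]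
    have hsup : (a ⊔ b) i = j := by simp [hab.1, hab.2]
    simp only [pinnedProb, hab.1, hab.2, hinf, hsup, if_true]
    exact (vecProb_mul_vecProb q a b).le
  · rw [pinnedProb, pinnedProb, ite_zero_mul_ite_zero, if_neg hab]
    exact mul_nonneg (pinnedProb_nonneg hq i j _) (pinnedProb_nonneg hq i j _)

variable [DecidableEq I]

lemma pinnedProb_mul_update (q : I → Fin (B + 1) → ℝ) (i : I) (j : Fin (B + 1))
    (f : Vec I B → ℝ) (v : Vec I B) :
    pinnedProb q i j v * f (Function.update v i j) = pinnedProb q i j v * f v := by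
  unfold pinnedProb
  split
  · next hv => rw [← hv, Function.update_eq_self]
  · simp

end ProductMeasure

section KeepBoth

variable {I : Type} {B : ℕ}

def keepBoth (v u₁ u₂ : Vec I B) : Vec I B :=
  fun i => if u₁ i = v i ∧ u₂ i = v i then v i else 0

lemma keepBoth_le_left (v u₁ u₂ : Vec I B) : keepBoth v u₁ u₂ ≤ u₁ := fun k => by
  unfold keepBoth
  split
  · next h => exact h.1.ge
  · exact Fin.zero_le _

lemma keepBoth_le_right (v u₁ u₂ : Vec I B) : keepBoth v u₁ u₂ ≤ u₂ := fun k => by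
  unfold keepBoth
  split
  · next h => exact h.2.ge
  · exact Fin.zero_le _

lemma keepBoth_apply_eq_zero_or_eq (v u₁ u₂ : Vec I B) (i : I) :
    keepBoth v u₁ u₂ i = 0 ∨ keepBoth v u₁ u₂ i = v i := by
  unfold keepBoth
  split
  · exact Or.inr rfl
  · exact Or.inl rfl

lemma keepBoth_apply_eq_self_iff {v u₁ u₂ : Vec I B} {i : I} (hv : v i ≠ 0) :
    keepBoth v u₁ u₂ i = v i ↔ u₁ i = v i ∧ u₂ i = v i := by
  unfold keepBoth
  split
  · next h => exact iff_of_true rfl h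
  · next h => exact iff_of_false (Ne.symm hv) h

end KeepBoth

section CombineKernel

variable {I : Type} [Fintype I] [DecidableEq I] {B : ℕ}

def keepProb (ψ : Vec I B → Vec I B → ℝ) (i : I) (v : Vec I B) : ℝ :=
  ∑ w : Vec I B, if w i = v i then ψ v w else 0

lemma keepProb_nonneg {ψ : Vec I B → Vec I B → ℝ} (hψ : IsKernel ψ) (i : I) (v : Vec I B) :
    0 ≤ keepProb ψ i v :=
  sum_nonneg fun w _ => by split <;> [exact hψ.1 v w; exact le_rfl]

lemma MonotoneCRS.antitone_keepProb_update {ψ : Vec I B → Vec I B → ℝ} (hψ : MonotoneCRS ψ)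
    (i : I) (j : Fin (B + 1)) : Antitone fun v => keepProb ψ i (Function.update v i j) :=
  fun _ _ huv => hψ _ _ i (update_le_update_iff.2 ⟨le_rfl, fun k _ => huv k⟩) (by simp)

lemma sum_ite_and_mul_eq_sum_pinnedProb_mul_keepProb (q : I → Fin (B + 1) → ℝ)
    (ψ : Vec I B → Vec I B → ℝ) (i : I) (j : Fin (B + 1)) :
    ∑ v : Vec I B, ∑ u : Vec I B, (if v i = j ∧ u i = j then vecProb q v * ψ v u else 0) =
      ∑ v, pinnedProb q i j v * keepProb ψ i v := by
  refine sum_congr rfl fun v _ => ?_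
  by_cases hv : v i = j
  · simp [pinnedProb, keepProb, hv, mul_sum]
  · simp [pinnedProb, hv]

lemma IsCRS.le_sum_pinnedProb_mul_keepProb {q : I → Fin (B + 1) → ℝ} {F : Set (Vec I B)}
    {α : ℝ} {ψ : Vec I B → Vec I B → ℝ} (h : IsCRS q F α ψ) {i : I} {j : Fin (B + 1)}
    (hj : j ≠ 0) : α * ∑ v, pinnedProb q i j v ≤ ∑ v, pinnedProb q i j v * keepProb ψ i v := by
  have h_keep := h.2.2 i j hj
  rwa [ge_iff_le, sum_ite_and_mul_eq_sum_pinnedProb_mul_keepProb] at h_keep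

variable {ψ₁ ψ₂ : Vec I B → Vec I B → ℝ}

lemma combineKernel_apply (v w : Vec I B) :
    combineKernel ψ₁ ψ₂ v w =
      ∑ u₁, ∑ u₂, if w = keepBoth v u₁ u₂ then ψ₁ v u₁ * ψ₂ v u₂ else 0 :=
  rfl

lemma sum_ite_combineKernel (P : Vec I B → Prop) [DecidablePred P] (v : Vec I B) :
    ∑ w, (if P w then combineKernel ψ₁ ψ₂ v w else 0) =
      ∑ u₁, ∑ u₂, if P (keepBoth v u₁ u₂) then ψ₁ v u₁ * ψ₂ v u₂ else 0 := by
  have h_push (w : Vec I B) : (if P w then combineKernel ψ₁ ψ₂ v w else 0) =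
      ∑ u₁ : Vec I B, ∑ u₂ : Vec I B, if w = keepBoth v u₁ u₂ then
        (if P (keepBoth v u₁ u₂) then ψ₁ v u₁ * ψ₂ v u₂ else 0) else 0 := by
    rw [combineKernel_apply]
    split_ifs with hP
    · exact sum_congr rfl fun u₁ _ => sum_congr rfl fun u₂ _ => by split_ifs <;> simp_all
    · exact (sum_eq_zero fun u₁ _ => sum_eq_zero fun u₂ _ => by split_ifs <;> simp_all).symm
  simp only [h_push]
  rw [sum_comm]
  refine sum_congr rfl fun u₁ _ => ?_
  rw [sum_comm]
  simp

lemma isKernel_combineKernel (hψ₁ : IsKernel ψ₁) (hψ₂ : IsKernel ψ₂) :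
    IsKernel (combineKernel ψ₁ ψ₂) := by
  refine ⟨fun v w => sum_nonneg fun u₁ _ => sum_nonneg fun u₂ _ => ?_, fun v => ?_⟩
  · split
    · exact mul_nonneg (hψ₁.1 v u₁) (hψ₂.1 v u₂)
    · exact le_rfl
  · simpa [hψ₁.2, hψ₂.2, ← sum_mul_sum] using
      sum_ite_combineKernel (ψ₁ := ψ₁) (ψ₂ := ψ₂) (fun _ => True) v

lemma keepProb_combineKernel (hψ₁ : IsKernel ψ₁) (hψ₂ : IsKernel ψ₂) (i : I) (v : Vec I B) :
    keepProb (combineKernel ψ₁ ψ₂) i v =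
      if v i = 0 then 1 else keepProb ψ₁ i v * keepProb ψ₂ i v := by
  rw [keepProb, sum_ite_combineKernel]
  split
  · next hv =>
    have h_keep (u₁ u₂ : Vec I B) : keepBoth v u₁ u₂ i = v i := by
      rcases keepBoth_apply_eq_zero_or_eq v u₁ u₂ i with h | h <;> simp [h, hv]
    simp [h_keep, ← sum_mul_sum, hψ₁.2, hψ₂.2]
  · next hv =>
    simp only [keepBoth_apply_eq_self_iff hv, keepProb, sum_mul_sum, ite_zero_mul_ite_zero]

lemma combineKernel_support {F₁ F₂ : Set (Vec I B)}
    (hsupp₁ : ∀ v u, ψ₁ v u ≠ 0 → u ∈ F₁) (hsupp₂ : ∀ v u, ψ₂ v u ≠ 0 → u ∈ F₂)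
    (hdc₁ : DownwardClosed F₁) (hdc₂ : DownwardClosed F₂) (v w : Vec I B)
    (hw : combineKernel ψ₁ ψ₂ v w ≠ 0) :
    w ∈ F₁ ∩ F₂ ∧ ∀ i, w i = 0 ∨ w i = v i := by
  obtain ⟨u₁, -, h₁⟩ := exists_ne_zero_of_sum_ne_zero hw
  obtain ⟨u₂, -, h₂⟩ := exists_ne_zero_of_sum_ne_zero h₁
  obtain ⟨rfl, hψ⟩ := ite_ne_right_iff.1 h₂
  exact ⟨⟨hdc₁ (keepBoth_le_left v u₁ u₂) (hsupp₁ v u₁ (left_ne_zero_of_mul hψ)),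
    hdc₂ (keepBoth_le_right v u₁ u₂) (hsupp₂ v u₂ (right_ne_zero_of_mul hψ))⟩,
    keepBoth_apply_eq_zero_or_eq v u₁ u₂⟩

lemma monotoneCRS_combineKernel (hψ₁ : IsKernel ψ₁) (hψ₂ : IsKernel ψ₂)
    (hm₁ : MonotoneCRS ψ₁) (hm₂ : MonotoneCRS ψ₂) : MonotoneCRS (combineKernel ψ₁ ψ₂) := by
  intro u v i huv hui
  change keepProb _ i v ≤ keepProb _ i u
  rw [keepProb_combineKernel hψ₁ hψ₂, keepProb_combineKernel hψ₁ hψ₂, hui]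
  split
  · exact le_rfl
  · exact mul_le_mul (hm₁ u v i huv hui) (hm₂ u v i huv hui) (keepProb_nonneg hψ₂ i v)
      (keepProb_nonneg hψ₁ i u)

lemma pinnedProb_mul_keepProb_combineKernel (hψ₁ : IsKernel ψ₁) (hψ₂ : IsKernel ψ₂)
    (q : I → Fin (B + 1) → ℝ) (i : I) {j : Fin (B + 1)} (hj : j ≠ 0) (v : Vec I B) :
    pinnedProb q i j v * keepProb (combineKernel ψ₁ ψ₂) i v =
      pinnedProb q i j v * (keepProb ψ₁ i v * keepProb ψ₂ i v) := by
  unfold pinnedProb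
  split
  · next hv => rw [keepProb_combineKernel hψ₁ hψ₂, if_neg (hv ▸ hj)]
  · simp

lemma le_sum_pinnedProb_mul_keepProb_combineKernel {q : I → Fin (B + 1) → ℝ}
    (hq : ∀ i j, 0 ≤ q i j)
    {α₁ α₂ : ℝ} (hα₁ : 0 ≤ α₁) (hα₂ : 0 ≤ α₂) (hψ₁ : IsKernel ψ₁) (hψ₂ : IsKernel ψ₂)
    (hm₁ : MonotoneCRS ψ₁) (hm₂ : MonotoneCRS ψ₂) {i : I} {j : Fin (B + 1)} (hj : j ≠ 0)
    (h₁ : α₁ * ∑ v, pinnedProb q i j v ≤ ∑ v, pinnedProb q i j v * keepProb ψ₁ i v)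
    (h₂ : α₂ * ∑ v, pinnedProb q i j v ≤ ∑ v, pinnedProb q i j v * keepProb ψ₂ i v) :
    α₁ * α₂ * ∑ v, pinnedProb q i j v ≤
      ∑ v, pinnedProb q i j v * keepProb (combineKernel ψ₁ ψ₂) i v := by
  set μ := pinnedProb q i j
  set S := ∑ v, μ v
  have hμ : 0 ≤ μ := pinnedProb_nonneg hq i j
  have hS : 0 ≤ S := sum_nonneg fun v _ => hμ v
  have h_combine : ∑ v, μ v * keepProb (combineKernel ψ₁ ψ₂) i v =
      ∑ v, μ v * (keepProb ψ₁ i v * keepProb ψ₂ i v) :=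
    sum_congr rfl fun v _ => pinnedProb_mul_keepProb_combineKernel hψ₁ hψ₂ q i hj v
  have h_harris := fkg_of_antitone hμ (fun v => keepProb_nonneg hψ₁ i _)
    (fun v => keepProb_nonneg hψ₂ i _) (hm₁.antitone_keepProb_update i j)
    (hm₂.antitone_keepProb_update i j) (pinnedProb_mul_pinnedProb_le hq i j)
  -- On the support of `μ` the update is the identity; it makes the keep probabilities antitone.
  have h_update (F : Vec I B → ℝ) :
      ∑ v, μ v * F (Function.update v i j) = ∑ v, μ v * F v :=
    sum_congr rfl fun v _ => pinnedProb_mul_update q i j F v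
  rw [h_update (keepProb ψ₁ i), h_update (keepProb ψ₂ i),
    h_update fun w => keepProb ψ₁ i w * keepProb ψ₂ i w, ← h_combine] at h_harris
  rcases hS.eq_or_lt with hS_zero | hS_pos
  · rw [← hS_zero, mul_zero]
    exact sum_nonneg fun v _ =>
      mul_nonneg (hμ v) (keepProb_nonneg (isKernel_combineKernel hψ₁ hψ₂) i v)
  · refine le_of_mul_le_mul_left ?_ hS_pos
    calc S * (α₁ * α₂ * S) = (α₁ * S) * (α₂ * S) := by ring
      _ ≤ _ := mul_le_mul h₁ h₂ (mul_nonneg hα₂ hS) ((mul_nonneg hα₁ hS).trans h₁)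
      _ ≤ _ := h_harris

end CombineKernel

/-- If `ψ₁` is a monotone `α₁`-CRS for `F₁` and `ψ₂` is a monotone `α₂`-CRS for `F₂`
with respect to `q`, then their combination is a monotone `α₁ * α₂`-CRS for `F₁ ∩ F₂`
with respect to `q`. -/
theorem combineKernel_isCRS {I : Type} [Fintype I] [DecidableEq I] {B : ℕ}
    (q : I → Fin (B + 1) → ℝ) (hq : IsDist q)
    (F₁ F₂ : Set (Vec I B)) (hdc₁ : DownwardClosed F₁) (hdc₂ : DownwardClosed F₂)
    (α₁ α₂ : ℝ) (hα₁ : α₁ ∈ Set.Icc (0 : ℝ) 1) (hα₂ : α₂ ∈ Set.Icc (0 : ℝ) 1)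
    (ψ₁ ψ₂ : Vec I B → Vec I B → ℝ)
    (h₁ : IsCRS q F₁ α₁ ψ₁) (hm₁ : MonotoneCRS ψ₁)
    (h₂ : IsCRS q F₂ α₂ ψ₂) (hm₂ : MonotoneCRS ψ₂) :
    IsCRS q (F₁ ∩ F₂) (α₁ * α₂) (combineKernel ψ₁ ψ₂) ∧
      MonotoneCRS (combineKernel ψ₁ ψ₂) := by
  refine ⟨⟨isKernel_combineKernel h₁.1 h₂.1,
    combineKernel_support (fun v u hu => (h₁.2.1 v u hu).1) (fun v u hu => (h₂.2.1 v u hu).1)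
      hdc₁ hdc₂,
    fun i j hj => ?_⟩, monotoneCRS_combineKernel h₁.1 h₂.1 hm₁ hm₂⟩
  rw [ge_iff_le, sum_ite_and_mul_eq_sum_pinnedProb_mul_keepProb]
  exact le_sum_pinnedProb_mul_keepProb_combineKernel hq.1 hα₁.1 hα₂.1 h₁.1 h₂.1 hm₁ hm₂ hj
    (h₁.le_sum_pinnedProb_mul_keepProb hj) (h₂.le_sum_pinnedProb_mul_keepProb hj)
end

section
/- Let I^out be a downward-closed family of subsets of I, let ȳ : I → [0,1], and for each i ∈ I let p_i be a probability distribution on {1,…,B}. Define the distribution h on vectors by h(i,j) = p_i(j)·ȳ(i) for j ∈ {1,…,B} and h(i,0) = 1 − ȳ(i). Let χ be a randomized mapping from subsets of I to subsets of I such that: (i) every set in the support of χ(R) is a subset of R belonging to I^out; (ii) if R is a random subset of I obtained by including each i independently with probability ȳ(i), then for every i ∈ I, Pr[i ∈ χ(R) and i ∈ R] ≥ γ·Pr[i ∈ R]; (iii) for all fixed sets R ⊆ R' and every i ∈ R, Pr_{S∼χ(R)}[i ∈ S] ≥ Pr_{S∼χ(R')}[i ∈ S]. Define the randomized mapping ψ^a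 on vectors by: given v, let R(v) = {i ∈ I : v(i) ≠ 0}, draw S ∼ χ(R(v)), and output the vector u with u(i) = v(i) for i ∈ S and u(i) = 0 otherwise. Then ψ^a is a monotone γ-CRS, with respect to h, for the downward-closed family of vectors {v : {i : v(i) ≠ 0} ∈ I^out}. -/
open Finset

/-- Probability of drawing the set `R` when each item `i` is included independently
with probability `y i`. -/
def setProb {I : Type} [Fintype I] [DecidableEq I] (y : I → ℝ) (R : Finset I) : ℝ :=
  (∏ i ∈ R, y i) * ∏ i ∈ Rᶜ, (1 - y i)

/-- The support of a vector: the set of items with nonzero state. -/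
def suppV {I : Type} [Fintype I] [DecidableEq I] {B : ℕ} (v : Vec I B) : Finset I :=
  Finset.univ.filter fun i => v i ≠ 0

/-- The randomized mapping `ψᵃ`: given `v`, draw `S ∼ χ (suppV v)` and keep exactly the
coordinates of `v` lying in `S`. -/
def psiA {I : Type} [Fintype I] [DecidableEq I] {B : ℕ}
    (χ : Finset I → Finset I → ℝ) (v w : Vec I B) : ℝ :=
  ∑ S : Finset I,
    if w = (fun i => if i ∈ S then v i else (0 : Fin (B + 1))) then χ (suppV v) S else 0


section Helpers

variable {I : Type} [Fintype I] [DecidableEq I] {B : ℕ}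

lemma sum_vec_prod (g : I → Fin (B + 1) → ℝ) :
    ∑ v : Vec I B, ∏ k, g k (v k) = ∏ k, ∑ x, g k x := by
  rw [Finset.prod_univ_sum (fun _ : I => (univ : Finset (Fin (B + 1)))) g,
    Fintype.piFinset_univ]

lemma prod_ite_mem' (a b : I → ℝ) (R : Finset I) :
    ∏ k, (if k ∈ R then a k else b k) = (∏ k ∈ R, a k) * ∏ k ∈ Rᶜ, b k := by
  rw [Finset.prod_ite]
  congr 1
  · congr 1; ext k; simp
  · congr 1; ext k; simp

lemma sum_prod_ite_mem (a b : I → ℝ) :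
    ∑ R : Finset I, ∏ k, (if k ∈ R then a k else b k) = ∏ k, (a k + b k) := by
  rw [Finset.prod_add, Finset.powerset_univ]
  refine Finset.sum_congr rfl fun R _ => ?_
  rw [prod_ite_mem', Finset.compl_eq_univ_sdiff]

lemma sum_setProb_mem (y : I → ℝ) (i : I) :
    ∑ R : Finset I, (if i ∈ R then setProb y R else 0) = y i := by
  have key : ∀ R : Finset I, (if i ∈ R then setProb y R else 0)
      = ∏ k, (if k ∈ R then y k else (if k = i then 0 else 1 - y k)) := by
    intro R
    by_cases hi : i ∈ R
    · rw [if_pos hi, setProb, prod_ite_mem']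
      congr 1
      refine (Finset.prod_congr rfl fun k hk => ?_).symm
      rw [if_neg]
      rintro rfl
      exact (Finset.mem_compl.mp hk) hi
    · rw [if_neg hi]
      refine (Finset.prod_eq_zero (Finset.mem_univ i) ?_).symm
      simp [hi]
  rw [Finset.sum_congr rfl fun R _ => key R, sum_prod_ite_mem,
    Fintype.prod_eq_single i]
  · simp
  · intro k hk
    rw [if_neg hk]; ring

lemma mem_suppV_iff {v : Vec I B} {k : I} : k ∈ suppV v ↔ v k ≠ 0 := by
  simp [suppV]

lemma sum_vecProb_ite (q : I → Fin (B + 1) → ℝ) (hq : ∀ k, ∑ x, q k x = 1)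
    (i : I) (j : Fin (B + 1)) :
    ∑ v : Vec I B, (if v i = j then vecProb q v else 0) = q i j := by
  have key : ∀ v : Vec I B, (if v i = j then vecProb q v else 0)
      = ∏ k, (if k = i then (if v k = j then q k (v k) else 0) else q k (v k)) := by
    intro v
    by_cases hv : v i = j
    · rw [if_pos hv, vecProb]
      refine Finset.prod_congr rfl fun k _ => ?_
      by_cases hk : k = i
      · subst hk; rw [if_pos rfl, if_pos hv]
      · rw [if_neg hk]
    · rw [if_neg hv]
      refine (Finset.prod_eq_zero (Finset.mem_univ i) ?_).symm
      simp [hv]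
  rw [Finset.sum_congr rfl fun v _ => key v]
  rw [show (∑ v : Vec I B, ∏ k, (if k = i then (if v k = j then q k (v k) else 0) else q k (v k)))
      = ∑ v : Vec I B, ∏ k, (fun k x => if k = i then (if x = j then q k x else 0) else q k x) k (v k)
    from rfl]
  rw [sum_vec_prod (fun k x => if k = i then (if x = j then q k x else 0) else q k x),
    Fintype.prod_eq_single i]
  · simp
  · intro k hk
    simp [hk, hq k]

lemma psiA_sum_ite (χ : Finset I → Finset I → ℝ) (v : Vec I B)
    (P : Vec I B → Prop) [DecidablePred P] :
    ∑ u : Vec I B, (if P u then psiA χ v u else 0)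
      = ∑ S : Finset I,
          (if P (fun k => if k ∈ S then v k else 0) then χ (suppV v) S else 0) := by
  unfold psiA
  have step : ∀ u : Vec I B,
      (if P u then
        ∑ S : Finset I,
          (if u = (fun k => if k ∈ S then v k else (0 : Fin (B + 1))) then χ (suppV v) S else 0)
        else 0)
      = ∑ S : Finset I,
          (if u = (fun k => if k ∈ S then v k else (0 : Fin (B + 1))) then
            (if P (fun k => if k ∈ S then v k else 0) then χ (suppV v) S else 0) else 0) := by
    intro u
    by_cases hP : P u
    · rw [if_pos hP]
      refine Finset.sum_congr rfl fun S _ => ?_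
      by_cases he : u = (fun k => if k ∈ S then v k else (0 : Fin (B + 1)))
      · rw [if_pos he, if_pos he, if_pos (he ▸ hP)]
      · rw [if_neg he, if_neg he]
    · rw [if_neg hP]
      refine (Finset.sum_eq_zero fun S _ => ?_).symm
      by_cases he : u = (fun k => if k ∈ S then v k else (0 : Fin (B + 1)))
      · rw [if_pos he, if_neg (fun hh => hP (he ▸ hh))]
      · rw [if_neg he]
  rw [Finset.sum_congr rfl fun u _ => step u, Finset.sum_comm]
  refine Finset.sum_congr rfl fun S _ => ?_
  rw [Finset.sum_ite_eq' univ _ (fun _ => _)]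
  simp

lemma psiA_sum (χ : Finset I → Finset I → ℝ) (hχs : ∀ R, ∑ S, χ R S = 1) (v : Vec I B) :
    ∑ u : Vec I B, psiA χ v u = 1 := by
  have := psiA_sum_ite (B := B) χ v (fun _ => True)
  simpa using this.trans (by simp [hχs])

lemma sum_vecProb_supp (y : I → ℝ) (p : I → Fin (B + 1) → ℝ)
    (hp0 : ∀ i, p i 0 = 0) (hps : ∀ i, ∑ j, p i j = 1)
    (h : I → Fin (B + 1) → ℝ)
    (hdef : ∀ i j, h i j = if j = 0 then 1 - y i else p i j * y i)
    (i : I) (j : Fin (B + 1)) (hj : j ≠ 0) (R : Finset I) :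
    ∑ v : Vec I B, (if suppV v = R ∧ v i = j then vecProb h v else 0)
      = if i ∈ R then p i j * setProb y R else 0 := by
  obtain ⟨g, hg⟩ : ∃ g : I → Fin (B + 1) → ℝ, g = fun k x =>
      (if k = i then (if x = j then (1 : ℝ) else 0) else 1) *
        (if (x ≠ 0 ↔ k ∈ R) then h k x else 0) := ⟨_, rfl⟩
  have key : ∀ v : Vec I B, (if suppV v = R ∧ v i = j then vecProb h v else 0)
      = ∏ k, g k (v k) := by
    intro v
    by_cases hc : suppV v = R ∧ v i = j
    · obtain ⟨h1, h2⟩ := hc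
      rw [if_pos ⟨h1, h2⟩, vecProb]
      refine Finset.prod_congr rfl fun k _ => ?_
      have hmem : v k ≠ 0 ↔ k ∈ R := by
        rw [← h1, mem_suppV_iff]
      by_cases hk : k = i
      · subst hk
        have hkR : k ∈ R := hmem.mp (by rw [h2]; exact hj)
        simp [hg, h2, hj, hkR]
      · simp [hg, hk, hmem]
    · rw [if_neg hc]
      rw [not_and_or] at hc
      rcases hc with hc | hc
      · have : ∃ k, ¬(v k ≠ 0 ↔ k ∈ R) := by
          by_contra hcon
          push_neg at hcon
          exact hc (Finset.ext fun k => by rw [mem_suppV_iff]; exact hcon k)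
        obtain ⟨k, hk⟩ := this
        refine (Finset.prod_eq_zero (Finset.mem_univ k) ?_).symm
        simp [hg, hk]
      · refine (Finset.prod_eq_zero (Finset.mem_univ i) ?_).symm
        simp [hg, hc]
  rw [Finset.sum_congr rfl fun v _ => key v, sum_vec_prod]
  have hfac : ∀ k, (∑ x, g k x)
      = if k = i then (if i ∈ R then p i j * y i else 0)
          else (if k ∈ R then y k else 1 - y k) := by
    intro k
    by_cases hk : k = i
    · subst hk
      rw [if_pos rfl]
      simp only [hg, eq_self_iff_true, if_true]
      rw [Finset.sum_congr rfl (fun x (_ : x ∈ univ) =>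
        show (if x = j then (1:ℝ) else 0) * (if (x ≠ 0 ↔ k ∈ R) then h k x else 0)
          = (if x = j then (if (x ≠ 0 ↔ k ∈ R) then h k x else 0) else 0)
        from by split_ifs <;> ring)]
      rw [Finset.sum_ite_eq' univ j _]
      simp only [Finset.mem_univ, if_pos]
      by_cases hi : k ∈ R
      · rw [if_pos hi, if_pos (by simp [hj, hi]), hdef, if_neg hj]
      · rw [if_neg hi, if_neg (by simp [hj, hi])]
    · rw [if_neg hk]
      simp only [hg, hk, if_false, one_mul]
      by_cases hkR : k ∈ R
      · rw [if_pos hkR, Fin.sum_univ_succ]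
        have h0 : (if ((0 : Fin (B+1)) ≠ 0 ↔ k ∈ R) then h k 0 else 0) = 0 := by
          simp [hkR]
        rw [h0, zero_add]
        have hsucc : ∀ x : Fin B,
            (if ((x.succ : Fin (B+1)) ≠ 0 ↔ k ∈ R) then h k x.succ else 0)
              = p k x.succ * y k := by
          intro x
          rw [if_pos (by simp [hkR, Fin.succ_ne_zero]), hdef,
            if_neg (Fin.succ_ne_zero x)]
        rw [Finset.sum_congr rfl fun x _ => hsucc x, ← Finset.sum_mul]
        have hone : ∑ x : Fin B, p k x.succ = 1 := by
          have := hps k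
          rw [Fin.sum_univ_succ, hp0, zero_add] at this
          exact this
        rw [hone, one_mul]
      · rw [if_neg hkR, Fin.sum_univ_succ]
        have h0 : (if ((0 : Fin (B+1)) ≠ 0 ↔ k ∈ R) then h k 0 else 0) = h k 0 := by
          simp [hkR]
        have hsucc : ∀ x : Fin B,
            (if ((x.succ : Fin (B+1)) ≠ 0 ↔ k ∈ R) then h k x.succ else 0) = 0 := by
          intro x
          rw [if_neg (by simp [hkR, Fin.succ_ne_zero])]
        rw [h0, Finset.sum_congr rfl fun x _ => hsucc x, Finset.sum_const_zero,
          add_zero, hdef, if_pos rfl]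
  rw [Finset.prod_congr rfl fun k _ => hfac k]
  have hstep : ∀ c : ℝ,
      (∏ k, (if k = i then c else (if k ∈ R then y k else 1 - y k)))
        = c * ∏ k ∈ univ.erase i, (if k ∈ R then y k else 1 - y k) := by
    intro c
    rw [← Finset.mul_prod_erase univ _ (Finset.mem_univ i), if_pos rfl]
    congr 1
    exact Finset.prod_congr rfl fun k hk => if_neg (Finset.mem_erase.mp hk).1
  by_cases hi : i ∈ R
  · have hrw : (∏ k, (if k = i then (if i ∈ R then p i j * y i else 0)
          else (if k ∈ R then y k else 1 - y k)))
        = ∏ k, (if k = i then p i j * y i else (if k ∈ R then y k else 1 - y k)) := by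
      refine Finset.prod_congr rfl fun k _ => ?_
      rw [if_pos hi]
    rw [hrw, hstep (p i j * y i), if_pos hi]
    have hsp : setProb y R = ∏ k, (if k ∈ R then y k else 1 - y k) := by
      rw [prod_ite_mem', setProb]
    have hsp2 : setProb y R
        = y i * ∏ k ∈ univ.erase i, (if k ∈ R then y k else 1 - y k) := by
      rw [hsp, ← Finset.mul_prod_erase univ _ (Finset.mem_univ i), if_pos hi]
    rw [hsp2]
    ring
  · have hz : (∏ k, (if k = i then (if i ∈ R then p i j * y i else 0)
          else (if k ∈ R then y k else 1 - y k))) = 0 :=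
      Finset.prod_eq_zero (Finset.mem_univ i) (by simp [hi])
    rw [hz, if_neg hi]

end Helpers

/-- Rounding a set-valued contention resolution scheme for a downward-closed set family
`Iout` yields a monotone `γ`-CRS, with respect to the distribution `h` induced by the
marginals `y` and the state distributions `p`, for the family of vectors whose support
belongs to `Iout`. -/
theorem psiA_isCRS {I : Type} [Fintype I] [DecidableEq I] {B : ℕ}
    (Iout : Set (Finset I))
    (hIout : ∀ S T : Finset I, S ⊆ T → T ∈ Iout → S ∈ Iout)
    (y : I → ℝ) (hy : ∀ i, y i ∈ Set.Icc (0 : ℝ) 1)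
    (p : I → Fin (B + 1) → ℝ) (hp0 : ∀ i, p i 0 = 0)
    (hpn : ∀ i j, 0 ≤ p i j) (hps : ∀ i, ∑ j, p i j = 1)
    (γ : ℝ)
    (χ : Finset I → Finset I → ℝ)
    (hχn : ∀ R S, 0 ≤ χ R S) (hχs : ∀ R, ∑ S, χ R S = 1)
    -- (i) every set in the support of `χ R` is a subset of `R` belonging to `Iout`
    (hsupp : ∀ R S, χ R S ≠ 0 → S ⊆ R ∧ S ∈ Iout)
    -- (ii) for the random set `R` with marginals `y`: Pr[i ∈ χ(R) ∧ i ∈ R] ≥ γ ⬝ Pr[i ∈ R]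
    (hγ : ∀ i : I,
      ∑ R : Finset I, ∑ S : Finset I,
          (if i ∈ S ∧ i ∈ R then setProb y R * χ R S else 0) ≥
        γ * ∑ R : Finset I, (if i ∈ R then setProb y R else 0))
    -- (iii) monotonicity of `χ`
    (hmono : ∀ R R' : Finset I, R ⊆ R' → ∀ i ∈ R,
      ∑ S : Finset I, (if i ∈ S then χ R S else 0) ≥
        ∑ S : Finset I, (if i ∈ S then χ R' S else 0))
    (h : I → Fin (B + 1) → ℝ)
    (hdef : ∀ i j, h i j = if j = 0 then 1 - y i else p i j * y i) :
    DownwardClosed {v : Vec I B | suppV v ∈ Iout} ∧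
      IsCRS h {v : Vec I B | suppV v ∈ Iout} γ (psiA χ) ∧
      MonotoneCRS (psiA χ : Vec I B → Vec I B → ℝ) := by
  classical
  have hsum : ∀ k, ∑ x, h k x = 1 := by
    intro k
    rw [Fin.sum_univ_succ, hdef k 0, if_pos rfl]
    have hsucc : ∀ x : Fin B, h k x.succ = p k x.succ * y k := fun x => by
      rw [hdef, if_neg (Fin.succ_ne_zero x)]
    rw [Finset.sum_congr rfl fun x _ => hsucc x, ← Finset.sum_mul]
    have hone : ∑ x : Fin B, p k x.succ = 1 := by
      have hh := hps k
      rw [Fin.sum_univ_succ, hp0, zero_add] at hh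
      exact hh
    rw [hone, one_mul]
    ring
  have hle_supp : ∀ {u v : Vec I B}, u ≤ v → suppV u ⊆ suppV v := by
    intro u v huv k hk
    rw [mem_suppV_iff] at hk ⊢
    intro h0
    apply hk
    have hle := huv k
    rw [h0] at hle
    exact Fin.le_zero_iff.mp hle
  have l : ∀ (x : Vec I B) (i : I) (c : Fin (B + 1)),
      ∑ w : Vec I B, (if w i = c then psiA χ x w else 0)
        = ∑ S : Finset I, (if (if i ∈ S then x i else 0) = c then χ (suppV x) S else 0) := by
    intro x i c
    have hps' := psiA_sum_ite (B := B) χ x (fun w => w i = c)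
    simpa only [] using hps'
  refine ⟨?_, ⟨⟨?_, ?_⟩, ?_, ?_⟩, ?_⟩
  · intro u v huv hv
    exact hIout _ _ (hle_supp huv) hv
  · intro v u
    refine Finset.sum_nonneg fun S _ => ?_
    split_ifs
    · exact hχn _ _
    · exact le_refl 0
  · exact psiA_sum χ hχs
  · intro v u hne
    obtain ⟨S, _, hS⟩ := Finset.exists_ne_zero_of_sum_ne_zero hne
    have he : u = (fun k => if k ∈ S then v k else 0) := by
      by_contra hne'
      exact hS (if_neg hne')
    rw [if_pos he] at hS
    obtain ⟨hsub, hin⟩ := hsupp _ _ hS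
    constructor
    · show suppV u ∈ Iout
      refine hIout _ S ?_ hin
      intro k hk
      rw [mem_suppV_iff, he] at hk
      by_contra hkS
      simp [hkS] at hk
    · intro k
      rw [he]
      by_cases hk : k ∈ S
      · right; simp [hk]
      · left; simp [hk]
  · intro i j hj
    have hψsum : ∀ v : Vec I B, v i = j →
        ∑ u : Vec I B, (if u i = j then psiA χ v u else 0)
          = ∑ S : Finset I, (if i ∈ S then χ (suppV v) S else 0) := by
      intro v hv
      rw [l v i j]
      refine Finset.sum_congr rfl fun S _ => ?_
      by_cases hS : i ∈ S
      · rw [if_pos hS, if_pos hS, if_pos hv]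
      · rw [if_neg hS, if_neg hS, if_neg (fun h0 => hj h0.symm)]
    have e1 : ∀ v : Vec I B, ∑ u : Vec I B,
        (if v i = j ∧ u i = j then vecProb h v * psiA χ v u else 0)
        = ∑ R : Finset I, (if suppV v = R ∧ v i = j then vecProb h v else 0) *
            ∑ S : Finset I, (if i ∈ S then χ R S else 0) := by
      intro v
      by_cases hv : v i = j
      · have l1 : ∑ u : Vec I B, (if v i = j ∧ u i = j then vecProb h v * psiA χ v u else 0)
            = vecProb h v * ∑ u : Vec I B, (if u i = j then psiA χ v u else 0) := by
          rw [Finset.mul_sum]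
          refine Finset.sum_congr rfl fun u _ => ?_
          by_cases hu : u i = j
          · rw [if_pos ⟨hv, hu⟩, if_pos hu]
          · rw [if_neg (fun hc => hu hc.2), if_neg hu, mul_zero]
        rw [l1, hψsum v hv]
        have hz : ∀ R ∈ (univ : Finset (Finset I)), R ≠ suppV v →
            (if suppV v = R ∧ v i = j then vecProb h v else 0) *
              (∑ S : Finset I, (if i ∈ S then χ R S else 0)) = 0 := by
          intro R _ hR
          rw [if_neg, zero_mul]
          exact fun hc => hR hc.1.symm
        rw [Finset.sum_eq_single_of_mem (suppV v) (Finset.mem_univ _) hz,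
          if_pos (⟨rfl, hv⟩ : suppV v = suppV v ∧ v i = j)]
      · have hz1 : ∀ u ∈ (univ : Finset (Vec I B)),
            (if v i = j ∧ u i = j then vecProb h v * psiA χ v u else 0) = 0 := by
          intro u _
          exact if_neg (fun hc => hv hc.1)
        have hz2 : ∀ R ∈ (univ : Finset (Finset I)),
            (if suppV v = R ∧ v i = j then vecProb h v else 0) *
              (∑ S : Finset I, (if i ∈ S then χ R S else 0)) = 0 := by
          intro R _
          rw [if_neg (fun hc => hv hc.2), zero_mul]
        rw [Finset.sum_eq_zero hz1, Finset.sum_eq_zero hz2]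
    have hLHS : ∑ v : Vec I B, ∑ u : Vec I B,
        (if v i = j ∧ u i = j then vecProb h v * psiA χ v u else 0)
        = p i j * ∑ R : Finset I, ∑ S : Finset I,
            (if i ∈ S ∧ i ∈ R then setProb y R * χ R S else 0) := by
      rw [Finset.sum_congr rfl fun v _ => e1 v, Finset.sum_comm]
      have e2 : ∀ R : Finset I,
          ∑ v : Vec I B, (if suppV v = R ∧ v i = j then vecProb h v else 0) *
              (∑ S : Finset I, (if i ∈ S then χ R S else 0))
            = (if i ∈ R then p i j * setProb y R else 0) *
              ∑ S : Finset I, (if i ∈ S then χ R S else 0) := by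
        intro R
        rw [← Finset.sum_mul, sum_vecProb_supp y p hp0 hps h hdef i j hj R]
      rw [Finset.sum_congr rfl fun R _ => e2 R, Finset.mul_sum]
      refine Finset.sum_congr rfl fun R _ => ?_
      rw [Finset.mul_sum, Finset.mul_sum]
      refine Finset.sum_congr rfl fun S _ => ?_
      by_cases hR : i ∈ R <;> by_cases hS : i ∈ S <;>
        simp [hR, hS] <;> ring
    rw [ge_iff_le, hLHS, sum_vecProb_ite h hsum i j, hdef i j, if_neg hj]
    have hineq := mul_le_mul_of_nonneg_left (hγ i) (hpn i j)
    rw [sum_setProb_mem y i] at hineq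
    calc γ * (p i j * y i) = p i j * (γ * y i) := by ring
      _ ≤ _ := hineq
  · intro u v i huv hui
    rw [ge_iff_le, l u i (u i), l v i (v i)]
    by_cases h0 : u i = 0
    · have hv0 : v i = 0 := by rw [← hui]; exact h0
      have e1 : ∀ S : Finset I,
          (if (if i ∈ S then u i else 0) = u i then χ (suppV u) S else 0)
            = χ (suppV u) S := by
        intro S
        rw [if_pos]
        by_cases hS : i ∈ S <;> simp [hS, h0]
      have e2 : ∀ S : Finset I,
          (if (if i ∈ S then v i else 0) = v i then χ (suppV v) S else 0)
            = χ (suppV v) S := by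
        intro S
        rw [if_pos]
        by_cases hS : i ∈ S <;> simp [hS, hv0]
      rw [Finset.sum_congr rfl fun S _ => e1 S, Finset.sum_congr rfl fun S _ => e2 S,
        hχs, hχs]
    · have hv0 : v i ≠ 0 := by rw [← hui]; exact h0
      have e1 : ∀ S : Finset I,
          (if (if i ∈ S then u i else 0) = u i then χ (suppV u) S else 0)
            = (if i ∈ S then χ (suppV u) S else 0) := by
        intro S
        by_cases hS : i ∈ S
        · rw [if_pos hS, if_pos hS, if_pos rfl]
        · rw [if_neg hS, if_neg hS, if_neg (fun hc => h0 hc.symm)]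
      have e2 : ∀ S : Finset I,
          (if (if i ∈ S then v i else 0) = v i then χ (suppV v) S else 0)
            = (if i ∈ S then χ (suppV v) S else 0) := by
        intro S
        by_cases hS : i ∈ S
        · rw [if_pos hS, if_pos hS, if_pos rfl]
        · rw [if_neg hS, if_neg hS, if_neg (fun hc => hv0 hc.symm)]
      rw [Finset.sum_congr rfl fun S _ => e1 S, Finset.sum_congr rfl fun S _ => e2 S]
      exact hmono (suppV u) (suppV v) (hle_supp huv) i (mem_suppV_iff.mpr h0)
end

section
/- Let σ = (a₁,…,a_m) be a sequence of distinct items with start times t(a₁) ≤ t(a₂) ≤ ⋯ ≤ t(a_m) (t taking nonnegative real values) and nonnegative costs c(a₁),…,c(a_m). Let σ' be any subsequence of σ, and run the sequential selection procedure on σ': processing the items of σ' in order, an item a is selected if and only if the total cost of the items of σ' already selected is at most t(a). Then every item a occurring in σ' that satisfies Σ_{b ∈ σ : t(b) ≤ t(a), b ≠ a} c(b) ≤ t(a) is selected by the procedure. -/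
open Finset

/-- The sequential selection procedure: processing the items in order while maintaining
the running total `tot` of the costs of selected items, an item `a` is selected
(adding `c a` to the running total) exactly when the current running total is at
most `t a`. -/
noncomputable def select {A : Type} (t c : A → ℝ) : List A → ℝ → List A
  | [], _ => []
  | a :: rest, tot =>
      if tot ≤ t a then a :: select t c rest (tot + c a) else select t c rest tot

/-!
When the selection reaches `a`, its running total is the initial total plus the costs of the
items selected so far. All of these come before `a`, hence have start time at most `t a`, so
the running total is bounded by the initial total plus the cost of the other items with start
time at most `t a`. Passing to a subsequence only removes items from that sum.
-/

theorem List.sum_filter_toFinset_cons {A M : Type} [DecidableEq A] [AddCommMonoid M]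
    {p : A → Prop} [DecidablePred p] (f : A → M) {x : A} {l : List A} (hx : x ∉ l) (hp : p x) :
    ∑ b ∈ (x :: l).toFinset.filter p, f b = f x + ∑ b ∈ l.toFinset.filter p, f b := by
  rw [List.toFinset_cons, filter_insert, if_pos hp,
    sum_insert fun h => hx (List.mem_toFinset.mp (mem_filter.mp h).1)]

theorem mem_select_of_add_sum_le {A : Type} [DecidableEq A] {t c : A → ℝ} (hc : ∀ a, 0 ≤ c a)
    {l : List A} (hnd : l.Nodup) (hsorted : l.Pairwise fun a b => t a ≤ t b)
    {a : A} (ha : a ∈ l) {tot : ℝ}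
    (hcond : tot + ∑ b ∈ l.toFinset.filter (fun b => t b ≤ t a ∧ b ≠ a), c b ≤ t a) :
    a ∈ select t c l tot := by
  induction l generalizing tot with
  | nil => exact absurd ha List.not_mem_nil
  | cons x rest ih =>
    obtain ⟨hx_notMem, hnd_rest⟩ := List.nodup_cons.mp hnd
    obtain ⟨hx_le, hsorted_rest⟩ := List.pairwise_cons.mp hsorted
    rcases List.mem_cons.mp ha with rfl | ha_rest
    · have htot : tot ≤ t a := le_of_add_le_of_nonneg_left hcond (sum_nonneg fun b _ => hc b)
      simp only [select, if_pos htot, List.mem_cons_self]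
    · have hxa : x ≠ a := fun h => hx_notMem (h ▸ ha_rest)
      rw [List.sum_filter_toFinset_cons c hx_notMem ⟨hx_le a ha_rest, hxa⟩] at hcond
      by_cases hx : tot ≤ t x
      · simp only [select, if_pos hx]
        exact List.mem_cons_of_mem x (ih hnd_rest hsorted_rest ha_rest (by linarith))
      · simp only [select, if_neg hx]
        exact ih hnd_rest hsorted_rest ha_rest (by linarith [hc x])

theorem mem_select_of_total_cost_le_general {A : Type} [DecidableEq A]
    (t c : A → ℝ) (hc : ∀ a, 0 ≤ c a)
    (σ σ' : List A) (hnd : σ.Nodup)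
    (hsorted : σ.Pairwise fun a b => t a ≤ t b)
    (hsub : σ'.Sublist σ)
    (a : A) (ha : a ∈ σ')
    (hcond : ∑ b ∈ σ.toFinset.filter (fun b => t b ≤ t a ∧ b ≠ a), c b ≤ t a) :
    a ∈ select t c σ' 0 := by
  refine mem_select_of_add_sum_le hc (hnd.sublist hsub) (hsorted.sublist hsub) ha ?_
  have hsubset : σ'.toFinset ⊆ σ.toFinset :=
    Multiset.toFinset_subset.mpr (Multiset.coe_subset.mpr hsub.subset)
  rw [zero_add]
  exact (sum_le_sum_of_subset_of_nonneg (filter_subset_filter _ hsubset) fun b _ _ => hc b).trans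
    hcond

/-- Let `σ` be a sequence of distinct items sorted in nondecreasing order of start
times `t`, with nonnegative costs `c`, and let `σ'` be any subsequence of `σ`.  Then
every item `a` of `σ'` with `∑ {b ∈ σ : t b ≤ t a, b ≠ a} c b ≤ t a` is selected when
the sequential selection procedure is run on `σ'` (with initial running total `0`). -/
theorem mem_select_of_total_cost_le {A : Type} [DecidableEq A]
    (t c : A → ℝ) (ht : ∀ a, 0 ≤ t a) (hc : ∀ a, 0 ≤ c a)
    (σ σ' : List A) (hnd : σ.Nodup)
    (hsorted : σ.Pairwise fun a b => t a ≤ t b)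
    (hsub : σ'.Sublist σ)
    (a : A) (ha : a ∈ σ')
    (hcond : ∑ b ∈ σ.toFinset.filter (fun b => t b ≤ t a ∧ b ≠ a), c b ≤ t a) :
    a ∈ select t c σ' 0 :=
  mem_select_of_total_cost_le_general t c hc σ σ' hnd hsorted hsub a ha hcond
end
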